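/- arXiv:0705.1947 — 4 statements merged into one kernel-verified Lean document; each statement's English description precedes it below -/
import Mathlib

section
/- Let A be a positive definite n×n complex matrix and define the sequence X_1 = A, X_{m+1} = ½(X_m + A X_m^{-1}). Then every X_m is positive definite, commutes with A, and X_m converges to A^{1/2}. -/
/-!
In the continuous functional calculus of `A`, the recursion becomes the scalar recursion
`f_{m+1}(λ) = (f_m(λ) + λ / f_m(λ)) / 2`, `f_0(λ) = λ`, since `cfc` is multiplicative and takes
`λ ↦ f(λ)⁻¹` to the inverse of `cfc f A`. Hence `X_{m+1} = cfc f_m A`, which is positive definite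
and commutes with `A` because every `f_m` is positive on the spectrum. On each eigenvalue `λ > 0`,
`f_m(λ)` is the classical Newton iteration for `√λ`: from the first step on it decreases and stays
above `√λ` (AM-GM), so it converges, and its limit is a fixed point of the step, i.e. `√λ`. The
spectrum is finite, so the convergence is uniform on it, and `cfc` is continuous in the function.
-/

open Matrix
open scoped ComplexOrder

/-- `Matrix.PosSemidef.sqrt` as it stood in Mathlib (Dec 2024); removed since. -/
noncomputable def Matrix.PosSemidef.sqrt {n : Type*} [Fintype n] [DecidableEq n] {𝕜 : Type*}
    [RCLike 𝕜] {A : Matrix n n 𝕜} (hA : A.PosSemidef) : Matrix n n 𝕜 :=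
  hA.1.eigenvectorUnitary.1 * diagonal ((↑) ∘ (√·) ∘ hA.1.eigenvalues) *
    (star hA.1.eigenvectorUnitary : Matrix n n 𝕜)

open Filter Topology Function Set

noncomputable def newtonSqrtStep (a x : ℝ) : ℝ := (x + a / x) / 2

lemma mapsTo_newtonSqrtStep_Ioi {a : ℝ} (ha : 0 ≤ a) :
    MapsTo (newtonSqrtStep a) (Ioi 0) (Ioi 0) :=
  fun x (hx : 0 < x) => show 0 < (x + a / x) / 2 by positivity

lemma newtonSqrtStep_iterate_pos {a x : ℝ} (ha : 0 ≤ a) (hx : 0 < x) (m : ℕ) :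
    0 < (newtonSqrtStep a)^[m] x :=
  (mapsTo_newtonSqrtStep_Ioi ha).iterate m hx

lemma sqrt_le_newtonSqrtStep {a x : ℝ} (ha : 0 ≤ a) (hx : 0 < x) :
    √a ≤ newtonSqrtStep a x := by
  have hq : a / x * x = a := div_mul_cancel₀ a hx.ne'
  unfold newtonSqrtStep
  nlinarith [sq_nonneg (x - √a), Real.sq_sqrt ha]

lemma newtonSqrtStep_le_self {a x : ℝ} (ha : 0 ≤ a) (hx : √a ≤ x) (hx₀ : 0 < x) :
    newtonSqrtStep a x ≤ x := by
  have : a / x ≤ x := by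
    rw [div_le_iff₀ hx₀]
    nlinarith [Real.sq_sqrt ha, Real.sqrt_nonneg a]
  unfold newtonSqrtStep
  linarith

lemma newtonSqrtStep_eq_self_iff {a x : ℝ} (hx : x ≠ 0) :
    newtonSqrtStep a x = x ↔ x ^ 2 = a := by
  unfold newtonSqrtStep
  constructor <;> intro h
  · field_simp at h
    linarith
  · field_simp
    linarith

lemma continuousAt_newtonSqrtStep {a x : ℝ} (hx : x ≠ 0) :
    ContinuousAt (newtonSqrtStep a) x := by
  unfold newtonSqrtStep
  fun_prop (disch := assumption)

lemma tendsto_newtonSqrtStep_iterate_of_sqrt_le {a x : ℝ} (ha : 0 < a) (hx : √a ≤ x) :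
    Tendsto (fun m => (newtonSqrtStep a)^[m] x) atTop (𝓝 √a) := by
  have hs : 0 < √a := Real.sqrt_pos.2 ha
  have hbound : ∀ m, √a ≤ (newtonSqrtStep a)^[m] x := fun m =>
    MapsTo.iterate (fun y (hy : √a ≤ y) => sqrt_le_newtonSqrtStep ha.le (hs.trans_le hy)) m hx
  have hanti : Antitone fun m => (newtonSqrtStep a)^[m] x := by
    refine antitone_nat_of_succ_le fun m => ?_
    rw [iterate_succ_apply']
    exact newtonSqrtStep_le_self ha.le (hbound m) (hs.trans_le (hbound m))
  set L := ⨅ m, (newtonSqrtStep a)^[m] x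
  have hlim : Tendsto (fun m => (newtonSqrtStep a)^[m] x) atTop (𝓝 L) :=
    tendsto_atTop_ciInf hanti ⟨√a, forall_mem_range.2 hbound⟩
  have hL₀ : 0 < L := hs.trans_le (le_ciInf hbound)
  have hfix : L ^ 2 = a := (newtonSqrtStep_eq_self_iff hL₀.ne').1 <|
    isFixedPt_of_tendsto_iterate hlim (continuousAt_newtonSqrtStep hL₀.ne')
  rwa [show √a = L by rw [← hfix, Real.sqrt_sq hL₀.le]]

theorem tendsto_newtonSqrtStep_iterate {a x : ℝ} (ha : 0 < a) (hx : 0 < x) :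
    Tendsto (fun m => (newtonSqrtStep a)^[m] x) atTop (𝓝 √a) := by
  rw [← tendsto_add_atTop_iff_nat 1]
  simp only [iterate_succ_apply]
  exact tendsto_newtonSqrtStep_iterate_of_sqrt_le ha (sqrt_le_newtonSqrtStep ha.le hx)

theorem Set.Finite.tendstoUniformlyOn {ι α β : Type*} [UniformSpace β] {F : ι → α → β}
    {f : α → β} {l : Filter ι} {s : Set α} (hs : s.Finite)
    (h : ∀ x ∈ s, Tendsto (F · x) l (𝓝 (f x))) : TendstoUniformlyOn F f l s := fun _ hu =>
  hs.eventually_all.2 fun x hx => Uniform.tendsto_nhds_right.1 (h x hx) hu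

lemma cfc_newtonSqrtStep {A : Type*} [Ring A] [StarRing A] [TopologicalSpace A] [Algebra ℝ A]
    [ContinuousFunctionalCalculus ℝ A IsSelfAdjoint] {a : A} {f : ℝ → ℝ}
    (hf₀ : ∀ x ∈ spectrum ℝ a, f x ≠ 0) (hf : ContinuousOn f (spectrum ℝ a))
    (ha : IsSelfAdjoint a) :
    cfc (fun x => newtonSqrtStep x (f x)) a =
      (2 : ℝ)⁻¹ • (cfc f a + a * Ring.inverse (cfc f a)) := by
  have hinv : ContinuousOn (fun x => (f x)⁻¹) (spectrum ℝ a) := hf.inv₀ hf₀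
  have hstep : (fun x => newtonSqrtStep x (f x)) = fun x => (2 : ℝ)⁻¹ * (f x + x * (f x)⁻¹) := by
    ext x
    simp only [newtonSqrtStep]
    ring
  rw [hstep, cfc_const_mul _ (fun x => f x + x * (f x)⁻¹) a (hf.add (continuousOn_id.mul hinv)),
    cfc_add a f (fun x => x * (f x)⁻¹) hf (continuousOn_id.mul hinv),
    cfc_mul (fun x => x) (fun x => (f x)⁻¹) a continuousOn_id hinv, cfc_id' ℝ a, cfc_inv f a hf₀]

namespace Matrix

variable {n 𝕜 : Type*} [Fintype n] [DecidableEq n] [RCLike 𝕜] {A : Matrix n n 𝕜}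

lemma PosSemidef.sqrt_eq_cfc (hA : A.PosSemidef) : hA.sqrt = cfc Real.sqrt A := by
  rw [hA.isHermitian.cfc_eq, IsHermitian.cfc, Unitary.conjStarAlgAut_apply]
  rfl

open scoped MatrixOrder in
lemma PosDef.spectrum_pos (hA : A.PosDef) : ∀ x ∈ spectrum ℝ A, 0 < x :=
  (StarOrderedRing.isStrictlyPositive_iff_spectrum_pos A hA.isHermitian).1 hA.isStrictlyPositive

open scoped MatrixOrder in
lemma IsHermitian.posDef_cfc {f : ℝ → ℝ} (hA : A.IsHermitian)
    (hf : ∀ x ∈ spectrum ℝ A, 0 < f x) : (cfc f A).PosDef :=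
  IsStrictlyPositive.posDef <|
    (cfc_isStrictlyPositive_iff f A (finite_real_spectrum.continuousOn f) hA).2 hf

variable {X : ℕ → Matrix n n 𝕜}

theorem PosDef.newton_iterate_eq_cfc (hA : A.PosDef) (hX₀ : X 0 = A)
    (hX : ∀ m, X (m + 1) = (2 : 𝕜)⁻¹ • (X m + A * (X m)⁻¹)) (m : ℕ) :
    X m = cfc (fun x => (newtonSqrtStep x)^[m] x) A := by
  induction m with
  | zero => exact hX₀.trans (cfc_id' ℝ A hA.isHermitian).symm
  | succ m ih =>
    have hpos : ∀ x ∈ spectrum ℝ A, 0 < (newtonSqrtStep x)^[m] x := fun x hx =>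
      newtonSqrtStep_iterate_pos (hA.spectrum_pos x hx).le (hA.spectrum_pos x hx) m
    simp only [iterate_succ_apply']
    rw [cfc_newtonSqrtStep (fun x hx => (hpos x hx).ne') (finite_real_spectrum.continuousOn _)
        hA.isHermitian, hX, ih, nonsing_inv_eq_ringInverse, RCLike.real_smul_eq_coe_smul (K := 𝕜),
      RCLike.ofReal_inv, RCLike.ofReal_ofNat]

theorem PosDef.tendsto_newton_iterate (hA : A.PosDef) (hX₀ : X 0 = A)
    (hX : ∀ m, X (m + 1) = (2 : 𝕜)⁻¹ • (X m + A * (X m)⁻¹)) :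
    Tendsto X atTop (𝓝 (cfc Real.sqrt A)) := by
  rw [funext (hA.newton_iterate_eq_cfc hX₀ hX)]
  exact tendsto_cfc_fun (finite_real_spectrum.tendstoUniformlyOn fun x hx =>
      tendsto_newtonSqrtStep_iterate (hA.spectrum_pos x hx) (hA.spectrum_pos x hx))
    (.of_forall fun _ => finite_real_spectrum.continuousOn _)

end Matrix

/-- Matrix Newton iteration for the square root of a positive definite matrix:
`X 1 = A`, `X (m+1) = ½ (X m + A * (X m)⁻¹)`.  Every iterate is positive
definite and commutes with `A`, and the sequence converges to `A^{1/2}`. -/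
theorem matrix_newton_iteration_tendsto_sqrt (n : ℕ)
    (A : Matrix (Fin n) (Fin n) ℂ) (hA : A.PosDef)
    (X : ℕ → Matrix (Fin n) (Fin n) ℂ)
    (hX1 : X 1 = A)
    (hrec : ∀ m, 1 ≤ m → X (m + 1) = (2 : ℂ)⁻¹ • (X m + A * (X m)⁻¹)) :
    (∀ m, 1 ≤ m → (X m).PosDef ∧ Commute A (X m)) ∧
      Filter.Tendsto X Filter.atTop (nhds hA.posSemidef.sqrt) := by
  have hrec' : ∀ m, X (m + 1 + 1) = (2 : ℂ)⁻¹ • (X (m + 1) + A * (X (m + 1))⁻¹) :=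
    fun m => hrec (m + 1) (Nat.le_add_left 1 m)
  refine ⟨fun m hm => ?_, ?_⟩
  · obtain ⟨m, rfl⟩ := Nat.exists_eq_add_of_le' hm
    rw [hA.newton_iterate_eq_cfc (X := fun m => X (m + 1)) hX1 hrec' m]
    exact ⟨hA.isHermitian.posDef_cfc fun x hx =>
        newtonSqrtStep_iterate_pos (hA.spectrum_pos x hx).le (hA.spectrum_pos x hx) m,
      ((Commute.refl A).cfc_real _).symm⟩
  · rw [hA.posSemidef.sqrt_eq_cfc, ← tendsto_add_atTop_iff_nat 1]
    exact hA.tendsto_newton_iterate hX1 hrec'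
end

section
/- For a positive semidefinite n×n complex matrix x, the Fuglede–Kadison determinant Δ(x) = exp(τ(log x)) (with Δ(x) = 0 if x is singular), where τ is the normalized trace, satisfies Δ(x) = lim_{p→0⁺} (τ(x^p))^{1/p}. -/
/-!
The power mean `M(p)^{1/p}`, `M(p) = ∑ wᵢ aᵢ^p`, tends to the geometric mean `∏ aᵢ^{wᵢ}` as
`p → 0⁺`. If all `aᵢ > 0`, then `M(0) = 1` and `M'(0) = ∑ wᵢ log aᵢ`, so
`log M(p) / p → ∑ wᵢ log aᵢ`. If some `aⱼ = 0` with `wⱼ > 0`, then `M(p)` tends to a limit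
below `1`, which forces `M(p)^{1/p} → 0`. With `aᵢ` the eigenvalues of `x` and `wᵢ = 1/n` the
geometric mean is `(∏ λᵢ)^{1/n} = |det x|^{1/n}`.
-/

open Filter Real Finset
open scoped ComplexOrder Topology

theorem tendsto_rpow_inv_of_hasDerivAt_of_eq_one {f : ℝ → ℝ} {d : ℝ} (hf : HasDerivAt f d 0)
    (h0 : f 0 = 1) : Tendsto (fun p => f p ^ p⁻¹) (𝓝[≠] 0) (𝓝 (exp d)) := by
  have hlog : HasDerivAt (fun p => log (f p)) d 0 := by
    simpa [h0] using hf.log (by simp [h0])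
  have hpos : ∀ᶠ p in 𝓝[≠] (0 : ℝ), 0 < f p :=
    (hf.continuousAt.tendsto.eventually_const_lt (by rw [h0]; exact one_pos)).filter_mono
      nhdsWithin_le_nhds
  refine ((continuous_exp.tendsto d).comp (hasDerivAt_iff_tendsto_slope.mp hlog)).congr' ?_
  filter_upwards [hpos] with p hp
  simp [slope_def_field, h0, rpow_def_of_pos hp, div_eq_mul_inv]

theorem tendsto_rpow_nhdsGT_zero (a : ℝ) :
    Tendsto (fun p : ℝ => a ^ p) (𝓝[>] 0) (𝓝 (if a = 0 then 0 else 1)) := by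
  split_ifs with h
  · refine tendsto_const_nhds.congr' ?_
    filter_upwards [self_mem_nhdsWithin] with p (hp : 0 < p)
    rw [h, zero_rpow hp.ne']
  · simpa using ((continuous_const_rpow h).tendsto 0).mono_left nhdsWithin_le_nhds

theorem tendsto_rpow_inv_nhdsGT_zero_of_tendsto_lt_one {M : ℝ → ℝ} {L : ℝ}
    (hM₀ : ∀ᶠ p in 𝓝[>] 0, 0 ≤ M p) (hM : Tendsto M (𝓝[>] 0) (𝓝 L)) (hL : L < 1) :
    Tendsto (fun p => M p ^ p⁻¹) (𝓝[>] 0) (𝓝 0) := by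
  obtain ⟨c, hc, hc₁⟩ := exists_between (max_lt hL one_pos)
  obtain ⟨hLc, hc₀⟩ := max_lt_iff.mp hc
  have hcp : Tendsto (fun p : ℝ => c ^ p⁻¹) (𝓝[>] 0) (𝓝 0) :=
    (tendsto_rpow_atTop_of_base_lt_one c (by linarith) hc₁).comp tendsto_inv_nhdsGT_zero
  refine squeeze_zero' ?_ ?_ hcp
  · filter_upwards [hM₀] with p hp using rpow_nonneg hp _
  · filter_upwards [hM₀, hM.eventually_lt_const hLc, self_mem_nhdsWithin] with p hp hpc
      (hp₀ : 0 < p)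
    exact rpow_le_rpow hp hpc.le (inv_nonneg.mpr hp₀.le)

section PowerMean

variable {ι : Type*} [Fintype ι] {w a : ι → ℝ}

theorem hasDerivAt_sum_mul_rpow (ha : ∀ i, 0 < a i) :
    HasDerivAt (fun p : ℝ => ∑ i, w i * a i ^ p) (∑ i, w i * log (a i)) 0 :=
  HasDerivAt.fun_sum fun i _ => by
    simpa using ((hasStrictDerivAt_const_rpow (ha i) 0).hasDerivAt.const_mul (w i))

theorem tendsto_sum_mul_rpow_rpow_inv_of_pos (hw : ∑ i, w i = 1) (ha : ∀ i, 0 < a i) :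
    Tendsto (fun p : ℝ => (∑ i, w i * a i ^ p) ^ p⁻¹) (𝓝[≠] 0) (𝓝 (∏ i, a i ^ w i)) := by
  convert tendsto_rpow_inv_of_hasDerivAt_of_eq_one (hasDerivAt_sum_mul_rpow ha)
    (by simpa using hw) using 2
  rw [exp_sum]
  exact prod_congr rfl fun i _ => by rw [rpow_def_of_pos (ha i), mul_comm]

theorem tendsto_sum_mul_rpow_rpow_inv_of_eq_zero (hw₀ : ∀ i, 0 ≤ w i) (hw : ∑ i, w i = 1)
    (ha : ∀ i, 0 ≤ a i) {j : ι} (hj : a j = 0) (hwj : 0 < w j) :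
    Tendsto (fun p : ℝ => (∑ i, w i * a i ^ p) ^ p⁻¹) (𝓝[>] 0) (𝓝 0) := by
  refine tendsto_rpow_inv_nhdsGT_zero_of_tendsto_lt_one
    (Eventually.of_forall fun p => sum_nonneg fun i _ => mul_nonneg (hw₀ i) (rpow_nonneg (ha i) p))
    (tendsto_finsetSum _ fun i _ => (tendsto_rpow_nhdsGT_zero (a i)).const_mul (w i)) ?_
  calc ∑ i, w i * (if a i = 0 then 0 else 1)
      < ∑ i, w i * 1 :=
        sum_lt_sum (fun i _ => mul_le_mul_of_nonneg_left (by split_ifs <;> norm_num) (hw₀ i))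
          ⟨j, mem_univ j, by simpa [hj] using hwj⟩
    _ = 1 := by simpa using hw

theorem tendsto_sum_mul_rpow_rpow_inv (hw₀ : ∀ i, 0 < w i) (hw : ∑ i, w i = 1)
    (ha : ∀ i, 0 ≤ a i) :
    Tendsto (fun p : ℝ => (∑ i, w i * a i ^ p) ^ p⁻¹) (𝓝[>] 0) (𝓝 (∏ i, a i ^ w i)) := by
  by_cases hpos : ∀ i, 0 < a i
  · exact (tendsto_sum_mul_rpow_rpow_inv_of_pos hw hpos).mono_left
      (nhdsWithin_mono _ fun _ (hp : 0 < _) => hp.ne')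
  · obtain ⟨j, hj⟩ := not_forall.mp hpos
    have hj₀ : a j = 0 := le_antisymm (not_lt.mp hj) (ha j)
    rw [prod_eq_zero (mem_univ j) (by rw [hj₀, zero_rpow (hw₀ j).ne'])]
    exact tendsto_sum_mul_rpow_rpow_inv_of_eq_zero (fun i => (hw₀ i).le) hw ha hj₀ (hw₀ j)

end PowerMean

/-- `Δ(x)` appears as `|det x|^{1/n}`, which is `exp (τ (log x))` for positive definite `x` and
`0` for singular `x`; `τ(x^p)` is written through the eigenvalues of `x`. -/
theorem fugledeKadison_det_eq_lim_p_norm (n : ℕ) (hn : 0 < n)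
    (x : Matrix (Fin n) (Fin n) ℂ) (hx : x.PosSemidef) :
    Filter.Tendsto
      (fun p : ℝ =>
        ((n : ℝ)⁻¹ * ∑ i, (hx.1.eigenvalues i) ^ p) ^ p⁻¹)
      (nhdsWithin 0 (Set.Ioi 0))
      (nhds (‖x.det‖ ^ ((n : ℝ)⁻¹))) := by
  have hev := hx.eigenvalues_nonneg
  have hdet : ‖x.det‖ ^ (n : ℝ)⁻¹ = ∏ i, hx.1.eigenvalues i ^ (n : ℝ)⁻¹ := by
    rw [finsetProd_rpow _ _ fun i _ => hev i, hx.1.det_eq_prod_eigenvalues, norm_prod]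
    simp [abs_of_nonneg (hev _)]
  have hw : ∑ _i : Fin n, (n : ℝ)⁻¹ = 1 := by
    simp [(Nat.cast_pos.mpr hn).ne']
  rw [hdet]
  simpa [mul_sum] using tendsto_sum_mul_rpow_rpow_inv (fun _ => by positivity) hw hev
end

section
/- Let A be a positive definite n×n complex matrix. Then inf{ τ(A·X) : X positive definite with det X ≥ 1 } = (det A)^{1/n}, where τ is the normalized trace. -/
/-! Write `X = B⋆B`. Then `τ(AX) = τ(BAB⋆)`, and AM–GM for the eigenvalues of the positive
semidefinite matrix `BAB⋆` gives `τ(AX) ≥ (det A · det X)^{1/n} ≥ (det A)^{1/n}` when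
`det X ≥ 1`. Equality holds at `X = (det A)^{1/n} A⁻¹`. -/

open Matrix
open scoped ComplexOrder MatrixOrder

namespace Matrix

variable {ι 𝕜 : Type*} [Fintype ι] [DecidableEq ι] [RCLike 𝕜]

lemma PosSemidef.norm_det_eq_prod_eigenvalues {M : Matrix ι ι 𝕜} (hM : M.PosSemidef) :
    ‖M.det‖ = ∏ i, hM.1.eigenvalues i := by
  rw [hM.1.det_eq_prod_eigenvalues, norm_prod]
  exact Finset.prod_congr rfl fun i _ ↦ by
    rw [RCLike.norm_ofReal, abs_of_nonneg (hM.eigenvalues_nonneg i)]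

lemma IsHermitian.re_trace_eq_sum_eigenvalues {M : Matrix ι ι 𝕜} (hM : M.IsHermitian) :
    RCLike.re M.trace = ∑ i, hM.eigenvalues i := by
  simp [hM.trace_eq_sum_eigenvalues]

lemma PosSemidef.norm_det_rpow_le_re_trace_div [Nonempty ι] {M : Matrix ι ι 𝕜}
    (hM : M.PosSemidef) :
    ‖M.det‖ ^ (Fintype.card ι : ℝ)⁻¹ ≤ RCLike.re M.trace / Fintype.card ι := by
  have hμ := hM.eigenvalues_nonneg
  have hcard : (Fintype.card ι : ℝ) ≠ 0 := by positivity
  have amgm := Real.geom_mean_le_arith_mean_weighted Finset.univ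
    (fun _ ↦ (Fintype.card ι : ℝ)⁻¹) hM.1.eigenvalues (fun _ _ ↦ by positivity)
    (by simp [hcard]) (fun i _ ↦ hμ i)
  rw [hM.norm_det_eq_prod_eigenvalues, hM.1.re_trace_eq_sum_eigenvalues,
    ← Real.finsetProd_rpow _ _ fun i _ ↦ hμ i]
  simpa [← Finset.mul_sum, div_eq_inv_mul] using amgm

lemma PosSemidef.norm_det_mul_rpow_le_re_trace_mul_div [Nonempty ι] {A X : Matrix ι ι 𝕜}
    (hA : A.PosSemidef) (hX : X.PosSemidef) :
    (‖A.det‖ * ‖X.det‖) ^ (Fintype.card ι : ℝ)⁻¹ ≤ RCLike.re (A * X).trace / Fintype.card ι := by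
  obtain ⟨B, rfl⟩ := CStarAlgebra.nonneg_iff_eq_star_mul_self.mp hX.nonneg
  have hBAB : (B * A * Bᴴ).PosSemidef := hA.mul_mul_conjTranspose_same B
  convert hBAB.norm_det_rpow_le_re_trace_div using 3
  · simp only [det_mul, star_eq_conjTranspose, det_conjTranspose, norm_mul, norm_star]
    ring
  · rw [star_eq_conjTranspose, ← Matrix.mul_assoc, trace_mul_cycle]

lemma norm_det_ofReal_smul_inv (A : Matrix ι ι 𝕜) (c : ℝ) :
    ‖((c : 𝕜) • A⁻¹).det‖ = |c| ^ Fintype.card ι / ‖A.det‖ := by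
  rw [det_smul, det_nonsing_inv, Ring.inverse_eq_inv, norm_mul, norm_pow, norm_inv,
    RCLike.norm_ofReal, div_eq_mul_inv]

lemma PosDef.trace_mul_smul_inv {A : Matrix ι ι 𝕜} (hA : A.PosDef) (c : ℝ) :
    RCLike.re (A * ((c : 𝕜) • A⁻¹)).trace = c * Fintype.card ι := by
  rw [mul_smul_comm, mul_nonsing_inv A (isUnit_iff_isUnit_det A |>.mp hA.isUnit), trace_smul,
    trace_one, smul_eq_mul, RCLike.re_ofReal_mul, RCLike.natCast_re]

theorem PosDef.isLeast_re_trace_mul_div [Nonempty ι] {A : Matrix ι ι 𝕜} (hA : A.PosDef) :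
    IsLeast {t : ℝ | ∃ X : Matrix ι ι 𝕜, X.PosDef ∧ 1 ≤ ‖X.det‖ ∧
        t = RCLike.re (A * X).trace / Fintype.card ι}
      (‖A.det‖ ^ (Fintype.card ι : ℝ)⁻¹) := by
  set δ := ‖A.det‖ ^ (Fintype.card ι : ℝ)⁻¹
  have hdet : 0 < ‖A.det‖ := norm_pos_iff.mpr hA.det_pos.ne'
  have hδ : 0 < δ := by positivity
  have hδpow : δ ^ Fintype.card ι = ‖A.det‖ :=
    Real.rpow_inv_natCast_pow hdet.le Fintype.card_ne_zero
  constructor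
  · refine ⟨(δ : 𝕜) • A⁻¹, hA.inv.smul (RCLike.ofReal_pos.mpr hδ), ?_, ?_⟩
    · rw [norm_det_ofReal_smul_inv, abs_of_pos hδ, hδpow, div_self hdet.ne']
    · rw [hA.trace_mul_smul_inv]
      field_simp
  · rintro t ⟨X, hX, hXdet, rfl⟩
    calc δ ≤ (‖A.det‖ * ‖X.det‖) ^ (Fintype.card ι : ℝ)⁻¹ := by
          refine Real.rpow_le_rpow hdet.le ?_ (by positivity)
          exact le_mul_of_one_le_right hdet.le hXdet
      _ ≤ _ := hA.posSemidef.norm_det_mul_rpow_le_re_trace_mul_div hX.posSemidef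

end Matrix

/-- Arveson's determinant formula in the finite-dimensional case: for a
positive definite `A ∈ M_n(ℂ)`,
`inf { τ(A·X) : X positive definite, det X ≥ 1 } = (det A)^{1/n}`,
where `τ` is the normalized trace.  (For positive definite matrices the
determinant and the trace are positive reals.) -/
theorem inf_normalized_trace_mul_posdef (n : ℕ) (hn : 0 < n)
    (A : Matrix (Fin n) (Fin n) ℂ) (hA : A.PosDef) :
    sInf {t : ℝ | ∃ X : Matrix (Fin n) (Fin n) ℂ, X.PosDef ∧
        1 ≤ ‖X.det‖ ∧ t = (Matrix.trace (A * X)).re / n} =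
      ‖A.det‖ ^ ((n : ℝ)⁻¹) := by
  have : Nonempty (Fin n) := ⟨⟨0, hn⟩⟩
  have h := hA.isLeast_re_trace_mul_div
  rw [Fintype.card_fin] at h
  exact h.csInf_eq
end

section
/- Let 0 < p < 1 and let T ∈ M_n(ℂ) be upper triangular with diagonal part Φ(T). Then τ(|Φ(T)|^p) ≤ τ(|T|^p), where |x| = (x*x)^{1/2} and τ is the normalized trace. -/
/-!
For a `k`-element set `S` of indices, the principal submatrix `T_SS` of an upper triangular `T`
is again triangular, so `∏_{i ∈ S} |T i i|² = |det T_SS|²`. By Cauchy–Binet,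
`|det T_SS|² ≤ det ((TᴴT)_SS)`; writing `TᴴT = U Λ Uᴴ` and applying Cauchy–Binet once more shows
that `det ((TᴴT)_SS)` is a convex combination of products of `k` eigenvalues of `TᴴT`. Hence the
numbers `|T i i|²` are weakly log-majorized by the eigenvalues of `TᴴT`, and weak
log-majorization gives `∑ aᵢ^q ≤ ∑ bᵢ^q` for every `q > 0`: after taking logarithms this is the
tangent-line bound `eʸ - eˣ ≥ eˣ (y - x)` summed by parts against the decreasing weights `eˣ`.
-/

open Finset Matrix
open scoped ComplexOrder

section OrderEmbedding

variable {n : Type*} [LinearOrder n] {k : ℕ}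

theorem exists_orderEmbedding_comp_perm {g : Fin k → n} (hg : Function.Injective g) :
    ∃ (s : Fin k ↪o n) (σ : Equiv.Perm (Fin k)), g = s ∘ σ := by
  let s := (univ.image g).orderEmbOfFin (by rw [card_image_of_injective _ hg, card_fin])
  have hmem : ∀ i, g i ∈ Set.range s := fun i => by simp [s]
  choose τ hτ using hmem
  have hτ_inj : Function.Injective τ := fun i j h => hg (by rw [← hτ i, ← hτ j, h])
  exact ⟨s, Equiv.ofBijective τ hτ_inj.bijective_of_finite, funext fun i => (hτ i).symm⟩

theorem OrderEmbedding.comp_perm_injective {s t : Fin k ↪o n} {σ τ : Equiv.Perm (Fin k)}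
    (h : ⇑s ∘ σ = ⇑t ∘ τ) : s = t ∧ σ = τ := by
  have hst : s = t := by
    rw [← OrderEmbedding.range_inj, ← σ.surjective.range_comp, h, τ.surjective.range_comp]
  subst hst
  exact ⟨rfl, Equiv.ext fun i => s.injective (congrFun h i)⟩

end OrderEmbedding

theorem Fin.castLE_le_of_strictMono {k N : ℕ} {f : Fin k → Fin N} (hf : StrictMono f)
    (hk : k ≤ N) (i : Fin k) : Fin.castLE hk i ≤ f i := by
  rcases i with ⟨i, hi⟩
  induction i with
  | zero => exact Fin.mk_le_mk.2 (Nat.zero_le _)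
  | succ i ih =>
    exact Nat.succ_le_of_lt ((ih (by omega)).trans_lt (hf (Fin.mk_lt_mk.2 (lt_add_one i))))

theorem prod_comp_le_prod_castLE_of_antitone {k N : ℕ} {f : Fin N → ℝ} (hf : Antitone f)
    (hf0 : 0 ≤ f) (hk : k ≤ N) (g : Fin k ↪ Fin N) :
    ∏ i, f (g i) ≤ ∏ i, f (Fin.castLE hk i) := by
  obtain ⟨s, σ, hg⟩ := exists_orderEmbedding_comp_perm g.injective
  rw [hg]
  exact (Equiv.prod_comp σ fun i => f (s i)).trans_le <| prod_le_prod (fun i _ => hf0 _)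
    fun i _ => hf (Fin.castLE_le_of_strictMono s.strictMono hk i)

theorem exists_equiv_fin_antitone {ι : Type*} [Fintype ι] (f : ι → ℝ) :
    ∃ e : Fin (Fintype.card ι) ≃ ι, Antitone (f ∘ e) := by
  let g : Fin (Fintype.card ι) → ℝ := fun i => -f ((Fintype.equivFin ι).symm i)
  refine ⟨(Tuple.sort g).trans (Fintype.equivFin ι).symm, fun i j hij => ?_⟩
  simpa [g] using Tuple.monotone_sort g hij

section WeakLogMajorization

theorem sum_mul_nonpos_of_antitoneOn {s z : ℕ → ℝ} {m : ℕ} (hs : AntitoneOn s (Set.Iio m))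
    (hs0 : ∀ i < m, 0 ≤ s i) (hz : ∀ k ≤ m, ∑ i ∈ range k, z i ≤ 0) :
    ∑ i ∈ range m, s i * z i ≤ 0 := by
  rcases m with _ | m
  · simp
  have hparts := sum_range_by_parts s z (m + 1)
  simp only [smul_eq_mul, add_tsub_cancel_right] at hparts
  have hlast : s m * ∑ i ∈ range (m + 1), z i ≤ 0 :=
    mul_nonpos_of_nonneg_of_nonpos (hs0 m (lt_add_one m)) (hz _ le_rfl)
  have hsteps : 0 ≤ ∑ i ∈ range m, (s (i + 1) - s i) * ∑ j ∈ range (i + 1), z j := by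
    refine sum_nonneg fun i hi => ?_
    simp only [mem_range] at hi
    exact mul_nonneg_of_nonpos_of_nonpos
      (sub_nonpos.2 (hs (Set.mem_Iio.2 (by omega)) (Set.mem_Iio.2 (by omega)) (Nat.le_succ i)))
      (hz _ (by omega))
  linarith

theorem sum_exp_le_sum_exp_of_sum_le {x y : ℕ → ℝ} {m : ℕ} (hx : AntitoneOn x (Set.Iio m))
    (hxy : ∀ k ≤ m, ∑ i ∈ range k, x i ≤ ∑ i ∈ range k, y i) :
    ∑ i ∈ range m, Real.exp (x i) ≤ ∑ i ∈ range m, Real.exp (y i) := by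
  have htangent : ∀ i, Real.exp (x i) - Real.exp (y i) ≤ Real.exp (x i) * (x i - y i) := by
    intro i
    have h := Real.add_one_le_exp (y i - x i)
    rw [Real.exp_sub, le_div_iff₀ (Real.exp_pos _)] at h
    linarith
  have habel : ∑ i ∈ range m, Real.exp (x i) * (x i - y i) ≤ 0 :=
    sum_mul_nonpos_of_antitoneOn (fun i hi j hj hij => Real.exp_le_exp.2 (hx hi hj hij))
      (fun i _ => (Real.exp_pos _).le) fun k hk => by
        rw [sum_sub_distrib]
        exact sub_nonpos.2 (hxy k hk)
  have hsum := sum_le_sum fun i (_ : i ∈ range m) => htangent i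
  rw [sum_sub_distrib] at hsum
  linarith

theorem sum_rpow_le_sum_rpow_of_prod_le_of_pos {a b : ℕ → ℝ} {m : ℕ}
    (ha : AntitoneOn a (Set.Iio m)) (ha0 : ∀ i < m, 0 < a i) (hb0 : ∀ i < m, 0 ≤ b i)
    (hab : ∀ k ≤ m, ∏ i ∈ range k, a i ≤ ∏ i ∈ range k, b i) {q : ℝ} (hq : 0 < q) :
    ∑ i ∈ range m, a i ^ q ≤ ∑ i ∈ range m, b i ^ q := by
  have hpos : ∀ k ≤ m, 0 < ∏ i ∈ range k, a i := fun k hk =>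
    prod_pos fun i hi => ha0 i ((mem_range.1 hi).trans_le hk)
  have hb_pos : ∀ i < m, 0 < b i := fun i hi => (hb0 i hi).lt_of_ne' fun hbi =>
    (hpos (i + 1) hi).not_ge
      ((hab (i + 1) hi).trans_eq (prod_eq_zero (self_mem_range_succ i) hbi))
  rw [sum_congr rfl fun i hi => Real.rpow_def_of_pos (ha0 i (mem_range.1 hi)) q,
    sum_congr rfl fun i hi => Real.rpow_def_of_pos (hb_pos i (mem_range.1 hi)) q]
  refine sum_exp_le_sum_exp_of_sum_le (fun i hi j hj hij =>
    mul_le_mul_of_nonneg_right (Real.log_le_log (ha0 j hj) (ha hi hj hij)) hq.le) fun k hk => ?_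
  rw [← sum_mul, ← sum_mul, ← Real.log_prod fun i hi => (ha0 i ((mem_range.1 hi).trans_le hk)).ne',
    ← Real.log_prod fun i hi => (hb_pos i ((mem_range.1 hi).trans_le hk)).ne']
  exact mul_le_mul_of_nonneg_right (Real.log_le_log (hpos k hk) (hab k hk)) hq.le

theorem sum_rpow_le_sum_rpow_of_prod_le {a b : ℕ → ℝ} {m : ℕ}
    (ha : AntitoneOn a (Set.Iio m)) (ha0 : ∀ i < m, 0 ≤ a i) (hb0 : ∀ i < m, 0 ≤ b i)
    (hab : ∀ k ≤ m, ∏ i ∈ range k, a i ≤ ∏ i ∈ range k, b i) {q : ℝ} (hq : 0 < q) :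
    ∑ i ∈ range m, a i ^ q ≤ ∑ i ∈ range m, b i ^ q := by
  induction m with
  | zero => simp
  | succ m ih =>
    by_cases ham : 0 < a m
    · exact sum_rpow_le_sum_rpow_of_prod_le_of_pos ha
        (fun i hi => ham.trans_le (ha hi (by simp) (Nat.le_of_lt_succ hi))) hb0 hab hq
    have ham0 : a m = 0 := le_antisymm (not_lt.1 ham) (ha0 m (lt_add_one m))
    have hprefix := ih (ha.mono (Set.Iio_subset_Iio (Nat.le_succ m)))
      (fun i hi => ha0 i (hi.trans (lt_add_one m))) (fun i hi => hb0 i (hi.trans (lt_add_one m)))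
      (fun k hk => hab k (hk.trans (Nat.le_succ m)))
    rw [sum_range_succ, sum_range_succ, ham0, Real.zero_rpow hq.ne', add_zero]
    exact hprefix.trans (le_add_of_nonneg_right (Real.rpow_nonneg (hb0 m (lt_add_one m)) q))

theorem sum_rpow_le_sum_rpow_of_antitone_of_prod_le {N : ℕ} {a b : Fin N → ℝ}
    (ha : Antitone a) (ha0 : 0 ≤ a) (hb0 : 0 ≤ b)
    (hab : ∀ k (hk : k ≤ N), ∏ i : Fin k, a (Fin.castLE hk i) ≤ ∏ i : Fin k, b (Fin.castLE hk i))
    {q : ℝ} (hq : 0 < q) : ∑ i, a i ^ q ≤ ∑ i, b i ^ q := by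
  let ext (f : Fin N → ℝ) (i : ℕ) : ℝ := if h : i < N then f ⟨i, h⟩ else 0
  have hext (f : Fin N → ℝ) (i : Fin N) : ext f i = f i := dif_pos i.isLt
  have hprod (f : Fin N → ℝ) (k : ℕ) (hk : k ≤ N) :
      ∏ i ∈ range k, ext f i = ∏ i : Fin k, f (Fin.castLE hk i) := by
    rw [← Fin.prod_univ_eq_prod_range]
    exact prod_congr rfl fun i _ => dif_pos _
  have hsum (f : Fin N → ℝ) : ∑ i, f i ^ q = ∑ i ∈ range N, ext f i ^ q := by
    rw [← Fin.sum_univ_eq_sum_range (fun i => ext f i ^ q)]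
    simp only [hext]
  rw [hsum a, hsum b]
  refine sum_rpow_le_sum_rpow_of_prod_le (fun i hi j hj hij => ?_)
    (fun i hi => (ha0 _).trans_eq (hext a ⟨i, hi⟩).symm)
    (fun i hi => (hb0 _).trans_eq (hext b ⟨i, hi⟩).symm) (fun k hk => ?_) hq
  · exact (hext a ⟨j, hj⟩).trans_le ((ha (Fin.mk_le_mk.2 hij)).trans_eq (hext a ⟨i, hi⟩).symm)
  · rw [hprod a k hk, hprod b k hk]
    exact hab k hk

theorem sum_rpow_le_sum_rpow_of_forall_prod_le {ι : Type*} [Fintype ι] {a b : ι → ℝ}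
    (ha : 0 ≤ a) (hb : 0 ≤ b)
    (hab : ∀ k (s : Fin k ↪ ι), ∃ t : Fin k ↪ ι, ∏ i, a (s i) ≤ ∏ i, b (t i))
    {q : ℝ} (hq : 0 < q) : ∑ i, a i ^ q ≤ ∑ i, b i ^ q := by
  obtain ⟨ea, hea⟩ := exists_equiv_fin_antitone a
  obtain ⟨eb, heb⟩ := exists_equiv_fin_antitone b
  rw [← ea.sum_comp, ← eb.sum_comp]
  refine sum_rpow_le_sum_rpow_of_antitone_of_prod_le hea (fun _ => ha _) (fun _ => hb _)
    (fun k hk => ?_) hq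
  obtain ⟨t, ht⟩ := hab k ((Fin.castLEEmb hk).trans ea.toEmbedding)
  calc ∏ i, a (ea (Fin.castLE hk i)) ≤ ∏ i, b (t i) := ht
    _ = ∏ i, (b ∘ eb) ((t.trans eb.symm.toEmbedding) i) := by simp
    _ ≤ ∏ i, b (eb (Fin.castLE hk i)) :=
      prod_comp_le_prod_castLE_of_antitone heb (fun _ => hb _) hk _

end WeakLogMajorization

section CauchyBinet

variable {R : Type*} [CommRing R] {n : Type*} [Fintype n] {k : ℕ}

theorem det_mul_eq_sum_prod_mul_det_submatrix (A : Matrix (Fin k) n R)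
    (B : Matrix n (Fin k) R) :
    (A * B).det = ∑ g : Fin k → n, (∏ i, A i (g i)) * (B.submatrix g id).det := by
  have hrows : A * B = of fun i => ∑ j, A i j • B j := by
    ext i l
    simp [mul_apply, Finset.sum_apply]
  rw [hrows]
  exact ((detRowAlternating (R := R)).toMultilinearMap.map_sum fun i j => A i j • B j).trans
    (sum_congr rfl fun g _ => (detRowAlternating (R := R)).map_smul_univ _ _)

theorem det_mul_eq_sum_det_submatrix_mul_det_submatrix [LinearOrder n]
    (A : Matrix (Fin k) n R) (B : Matrix n (Fin k) R) :
    (A * B).det = ∑ s : Fin k ↪o n, (A.submatrix id s).det * (B.submatrix s id).det := by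
  classical
  let F : (Fin k → n) → R := fun g => (∏ i, A i (g i)) * (B.submatrix g id).det
  have hinj : (univ.filter fun g : Fin k → n => Function.Injective g) =
      univ.image fun p : (Fin k ↪o n) × Equiv.Perm (Fin k) => (p.1 : Fin k → n) ∘ p.2 := by
    ext g
    simp only [mem_filter, mem_univ, true_and, mem_image, Prod.exists]
    constructor
    · rintro hg
      obtain ⟨s, σ, rfl⟩ := exists_orderEmbedding_comp_perm hg
      exact ⟨s, σ, rfl⟩
    · rintro ⟨s, σ, rfl⟩
      exact s.injective.comp σ.injective
  calc (A * B).det = ∑ g, F g := det_mul_eq_sum_prod_mul_det_submatrix A B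
    _ = ∑ g with Function.Injective g, F g := by
      refine (sum_subset (filter_subset _ _) fun g _ hg => ?_).symm
      obtain ⟨i, j, hij, hne⟩ := Function.not_injective_iff.1 (by simpa using hg)
      exact mul_eq_zero_of_right _ (det_zero_of_row_eq hne (by ext; simp [hij]))
    _ = ∑ s : Fin k ↪o n, ∑ σ : Equiv.Perm (Fin k), F (s ∘ σ) := by
      rw [hinj, sum_image fun p _ q _ h => Prod.ext_iff.2 (OrderEmbedding.comp_perm_injective h),
        ← univ_product_univ, sum_product]
    _ = _ := by
      refine sum_congr rfl fun s _ => ?_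
      rw [← det_transpose (A.submatrix id s), det_apply', sum_mul]
      refine sum_congr rfl fun σ _ => ?_
      simp only [F]
      rw [show B.submatrix (s ∘ σ) id = (B.submatrix s id).submatrix σ id from rfl, det_permute]
      simp only [Function.comp_apply, transpose_apply, submatrix_apply, id]
      ring

end CauchyBinet

section Spectral

variable {𝕜 : Type*} [RCLike 𝕜] {n : Type*} [Fintype n] [LinearOrder n] {k : ℕ}

theorem det_conjTranspose_mul_diagonal_mul (Y : Matrix n (Fin k) 𝕜) (μ : n → ℝ) :
    (Yᴴ * diagonal (fun j => (μ j : 𝕜)) * Y).det =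
      ((∑ s : Fin k ↪o n, (∏ i, μ (s i)) * ‖(Y.submatrix s id).det‖ ^ 2 : ℝ) : 𝕜) := by
  rw [det_mul_eq_sum_det_submatrix_mul_det_submatrix]
  push_cast
  refine sum_congr rfl fun s _ => ?_
  have hsub : (Yᴴ * diagonal (fun j => (μ j : 𝕜))).submatrix id s =
      (Y.submatrix s id)ᴴ * diagonal (fun i => (μ (s i) : 𝕜)) := by
    ext i j
    simp [mul_diagonal]
  rw [hsub, det_mul, det_conjTranspose, det_diagonal, mul_right_comm, mul_comm,
    RCLike.star_def, RCLike.conj_mul]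

theorem norm_det_submatrix_sq_le_re_det (Y : Matrix n (Fin k) 𝕜) (s : Fin k ↪o n) :
    ‖(Y.submatrix s id).det‖ ^ 2 ≤ RCLike.re (Yᴴ * Y).det := by
  have h := det_conjTranspose_mul_diagonal_mul Y 1
  simp only [Pi.one_apply, RCLike.ofReal_one, diagonal_one, Matrix.mul_one, prod_const_one,
    one_mul] at h
  rw [h, RCLike.ofReal_re]
  exact single_le_sum (f := fun t : Fin k ↪o n => ‖(Y.submatrix t id).det‖ ^ 2)
    (fun t _ => sq_nonneg _) (mem_univ s)

theorem Matrix.IsHermitian.exists_re_det_submatrix_le_prod_eigenvalues {A : Matrix n n 𝕜}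
    (hA : A.IsHermitian) (s : Fin k ↪ n) :
    ∃ t : Fin k ↪o n, RCLike.re (A.submatrix s s).det ≤ ∏ i, hA.eigenvalues (t i) := by
  set M : Matrix n (Fin k) 𝕜 := (star (hA.eigenvectorUnitary : Matrix n n 𝕜)).submatrix id s
  have hMM : Mᴴ * M = 1 := by
    rw [conjTranspose_submatrix, ← star_eq_conjTranspose, star_star,
      ← submatrix_mul _ _ _ _ _ Function.bijective_id,
      Unitary.mul_star_self_of_mem hA.eigenvectorUnitary.2, submatrix_one_embedding]
  have hAM : A.submatrix s s = Mᴴ * diagonal (fun j => (hA.eigenvalues j : 𝕜)) * M := by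
    conv_lhs => rw [hA.spectral_theorem, Unitary.conjStarAlgAut_apply]
    rw [submatrix_mul _ _ _ id _ Function.bijective_id,
      submatrix_mul _ _ _ id _ Function.bijective_id, submatrix_id_id, conjTranspose_submatrix,
      ← star_eq_conjTranspose, star_star]
    rfl
  -- Through `hAM`, Cauchy–Binet makes `det (A.submatrix s s)` the convex combination
  -- `∑ t, w t * ∏ i, λ (t i)`.
  set w : (Fin k ↪o n) → ℝ := fun t => ‖(M.submatrix t id).det‖ ^ 2
  have hw : ∑ t, w t = 1 := by
    have h := det_conjTranspose_mul_diagonal_mul M 1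
    simp only [Pi.one_apply, RCLike.ofReal_one, diagonal_one, Matrix.mul_one, prod_const_one,
      one_mul, hMM, det_one] at h
    exact_mod_cast h.symm
  obtain ⟨s', -, -⟩ := exists_orderEmbedding_comp_perm s.injective
  obtain ⟨t, -, ht⟩ := exists_max_image univ (fun t : Fin k ↪o n => ∏ i, hA.eigenvalues (t i))
    ⟨s', mem_univ _⟩
  refine ⟨t, ?_⟩
  rw [hAM, det_conjTranspose_mul_diagonal_mul, RCLike.ofReal_re]
  calc ∑ t', (∏ i, hA.eigenvalues (t' i)) * w t'
      ≤ ∑ t', (∏ i, hA.eigenvalues (t i)) * w t' :=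
        sum_le_sum fun t' _ => mul_le_mul_of_nonneg_right (ht t' (mem_univ _)) (sq_nonneg _)
    _ = ∏ i, hA.eigenvalues (t i) := by rw [← mul_sum, hw, mul_one]

theorem Matrix.BlockTriangular.exists_prod_norm_sq_le_prod_eigenvalues {T : Matrix n n 𝕜}
    (hT : T.BlockTriangular id) (s : Fin k ↪ n) :
    ∃ t : Fin k ↪ n, ∏ i, ‖T (s i) (s i)‖ ^ 2 ≤
      ∏ i, (isHermitian_conjTranspose_mul_self T).eigenvalues (t i) := by
  obtain ⟨s', σ, hs⟩ := exists_orderEmbedding_comp_perm s.injective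
  have hdiag : ∏ i, ‖T (s i) (s i)‖ ^ 2 = ‖(T.submatrix s' s').det‖ ^ 2 := by
    rw [det_of_isUpperTriangular (M := T.submatrix s' s') fun i j hij => hT (s'.strictMono hij),
      norm_prod, ← prod_pow, hs]
    exact Equiv.prod_comp σ fun i => ‖T (s' i) (s' i)‖ ^ 2
  obtain ⟨t, ht⟩ := IsHermitian.exists_re_det_submatrix_le_prod_eigenvalues
    (isHermitian_conjTranspose_mul_self T) s'.toEmbedding
  refine ⟨t.toEmbedding, ?_⟩
  calc ∏ i, ‖T (s i) (s i)‖ ^ 2 = ‖((T.submatrix id s').submatrix s' id).det‖ ^ 2 := hdiag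
    _ ≤ RCLike.re ((T.submatrix id s')ᴴ * T.submatrix id s').det :=
      norm_det_submatrix_sq_le_re_det _ s'
    _ = RCLike.re ((Tᴴ * T).submatrix s' s').det := by
      rw [conjTranspose_submatrix, ← submatrix_mul _ _ _ _ _ Function.bijective_id]
    _ ≤ _ := ht

end Spectral

theorem diagonal_part_contractive_p_lt_one_general (n : ℕ)
    (p : ℝ) (hp0 : 0 < p)
    (T : Matrix (Fin n) (Fin n) ℂ)
    (hT : T.BlockTriangular (id : Fin n → Fin n)) :
    (n : ℝ)⁻¹ * ∑ i, ‖T i i‖ ^ p ≤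
      (n : ℝ)⁻¹ *
        ∑ i, ((posSemidef_conjTranspose_mul_self T).1.eigenvalues i) ^ (p / 2) := by
  refine mul_le_mul_of_nonneg_left ?_ (by positivity)
  have hpow (i : Fin n) : ‖T i i‖ ^ p = (‖T i i‖ ^ 2) ^ (p / 2) := by
    rw [← Real.rpow_natCast, ← Real.rpow_mul (norm_nonneg _)]
    ring_nf
  simpa only [hpow] using sum_rpow_le_sum_rpow_of_forall_prod_le (a := fun i => ‖T i i‖ ^ 2)
    (fun _ => sq_nonneg _) (posSemidef_conjTranspose_mul_self T).eigenvalues_nonneg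
    (fun _ s => hT.exists_prod_norm_sq_le_prod_eigenvalues s) (half_pos hp0)

/-- Contractivity of the diagonal projection for `0 < p < 1`: for an upper
triangular `T ∈ M_n(ℂ)`, `τ(|Φ(T)|^p) ≤ τ(|T|^p)` where `Φ(T)` is the diagonal
part, `τ` is the normalized trace, and `τ(|T|^p)` is expressed via the
eigenvalues `λ_i` of `Tᴴ * T` as `(1/n) ∑ i, λ_i^{p/2}`. -/
theorem diagonal_part_contractive_p_lt_one (n : ℕ)
    (p : ℝ) (hp0 : 0 < p) (hp1 : p < 1)
    (T : Matrix (Fin n) (Fin n) ℂ)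
    (hT : T.BlockTriangular (id : Fin n → Fin n)) :
    (n : ℝ)⁻¹ * ∑ i, ‖T i i‖ ^ p ≤
      (n : ℝ)⁻¹ *
        ∑ i, ((posSemidef_conjTranspose_mul_self T).1.eigenvalues i) ^ (p / 2) :=
  diagonal_part_contractive_p_lt_one_general n p hp0 T hT
end
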